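/- Let N be an HPTP linear map on M_d(ℂ) and let U, V ∈ M_d(ℂ) be unitary matrices, with associated unitary channels 𝒰(X) = U X U† and 𝒱(X) = V X V†. Then ν(𝒰 ∘ N ∘ 𝒱) = ν(N), i.e., the physical implementability is invariant under pre- and post-composition with unitary channels. -/

import Mathlib

open scoped Kronecker ComplexOrder
open Matrix

noncomputable section

/-- `id_k ⊗ N` applied blockwise. -/
def idTensor {n m : Type*} (k : Type*)
    (N : Matrix n n ℂ → Matrix m m ℂ)
    (M : Matrix (k × n) (k × n) ℂ) : Matrix (k × m) (k × m) ℂ :=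
  Matrix.of fun p q => N (Matrix.of fun a b => M (p.1, a) (q.1, b)) p.2 q.2

/-- Trace-preserving. -/
def IsTP {n m : Type*} [Fintype n] [Fintype m]
    (N : Matrix n n ℂ → Matrix m m ℂ) : Prop :=
  ∀ X, (N X).trace = X.trace

/-- Hermitian-preserving. -/
def IsHP {n m : Type*} (N : Matrix n n ℂ → Matrix m m ℂ) : Prop :=
  ∀ X, X.IsHermitian → (N X).IsHermitian

/-- Completely positive: for every `k`, `id_k ⊗ N` preserves positive semidefiniteness. -/
def IsCP {n m : Type*} [Fintype n] [Fintype m]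
    (N : Matrix n n ℂ → Matrix m m ℂ) : Prop :=
  ∀ (k : ℕ) (M : Matrix (Fin k × n) (Fin k × n) ℂ),
    M.PosSemidef → (idTensor (Fin k) N M).PosSemidef

/-- Completely positive and trace-preserving (quantum channel). -/
def IsCPTP {n m : Type*} [Fintype n] [Fintype m]
    (N : Matrix n n ℂ → Matrix m m ℂ) : Prop :=
  IsLinearMap ℂ N ∧ IsCP N ∧ IsTP N

/-- Completely positive and trace non-increasing. -/
def IsCPTN {n m : Type*} [Fintype n] [Fintype m]
    (N : Matrix n n ℂ → Matrix m m ℂ) : Prop :=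
  IsLinearMap ℂ N ∧ IsCP N ∧ ∀ X : Matrix n n ℂ, X.PosSemidef → (N X).trace ≤ X.trace

/-- Costs of finite quasiprobability decompositions of `N` into CPTP maps. -/
def decompCosts {n m : Type*} [Fintype n] [Fintype m]
    (N : Matrix n n ℂ → Matrix m m ℂ) : Set ℝ :=
  { c | ∃ (s : ℕ) (η : Fin s → ℝ) (O : Fin s → (Matrix n n ℂ → Matrix m m ℂ)),
      (∀ i, IsCPTP (O i)) ∧ (∀ X, N X = ∑ i, (η i : ℂ) • O i X) ∧ c = ∑ i, |η i| }

/-- The physical implementability `ν(N)`. -/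
noncomputable def nu {n m : Type*} [Fintype n] [Fintype m]
    (N : Matrix n n ℂ → Matrix m m ℂ) : ℝ :=
  Real.logb 2 (sInf (decompCosts N))

/-- The Choi matrix of a linear map. -/
def choiMatrix {n m : Type*} [DecidableEq n]
    (N : Matrix n n ℂ → Matrix m m ℂ) : Matrix (n × m) (n × m) ℂ :=
  Matrix.of fun p q => N (Matrix.single p.1 q.1 1) p.2 q.2

/-- Partial trace over the second tensor factor. -/
def ptraceB {n m : Type*} [Fintype m] (J : Matrix (n × m) (n × m) ℂ) :
    Matrix n n ℂ :=
  Matrix.of fun i j => ∑ a, J (i, a) (j, a)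

/-- The trace norm of a matrix. -/
noncomputable def traceNorm {k : Type*} [Fintype k] [DecidableEq k]
    (X : Matrix k k ℂ) : ℝ :=
  ((let hA := Matrix.posSemidef_conjTranspose_mul_self X
    (hA.1.eigenvectorUnitary : Matrix k k ℂ) * diagonal (fun i => ((Real.sqrt (hA.1.eigenvalues i) : ℝ) : ℂ)) *
      (star hA.1.eigenvectorUnitary : Matrix k k ℂ)).trace).re

/-- Tensor product of two maps. -/
def tensorMap {n₁ n₂ m₂ : Type*} [Fintype n₁] [DecidableEq n₁]
    (M : Matrix n₁ n₁ ℂ → Matrix n₁ n₁ ℂ) (N : Matrix n₂ n₂ ℂ → Matrix m₂ m₂ ℂ)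
    (X : Matrix (n₁ × n₂) (n₁ × n₂) ℂ) : Matrix (n₁ × m₂) (n₁ × m₂) ℂ :=
  ∑ i : n₁, ∑ j : n₁,
    (M (Matrix.single i j 1)) ⊗ₖ (N (Matrix.of fun a b => X (i, a) (j, b)))

/-! Conjugating a map by matrices `A`, `B` preserves complete positivity, since `id_k ⊗ (A · Aᴴ)`
is conjugation by `1 ⊗ A`, and preserves trace preservation when `A`, `B` are isometries, by
cyclicity of the trace. So every CPTP decomposition of `N` transports to one of `𝒰 ∘ N ∘ 𝒱` with
the same coefficients, and conversely via `U†`, `V†`: the two sets of costs, hence the two values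
of `ν`, coincide. -/

section

variable {k n n' m m' : Type*} [Fintype k] [DecidableEq k]

theorem one_kronecker_mul_mul_conjTranspose_apply [Fintype n] (A : Matrix m n ℂ)
    (M : Matrix (k × n) (k × n) ℂ) (p q : k × m) :
    ((1 : Matrix k k ℂ) ⊗ₖ A * M * ((1 : Matrix k k ℂ) ⊗ₖ A)ᴴ) p q
      = (A * Matrix.of (fun a b => M (p.1, a) (q.1, b)) * Aᴴ) p.2 q.2 := by
  simp [Matrix.mul_apply, Matrix.kroneckerMap_apply, Matrix.one_apply, Fintype.sum_prod_type,
    ite_mul, Finset.sum_mul, apply_ite (starRingEnd ℂ)]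

theorem idTensor_conj_left [Fintype m] (N : Matrix n n ℂ → Matrix m m ℂ) (A : Matrix m' m ℂ)
    (M : Matrix (k × n) (k × n) ℂ) :
    idTensor k (fun X => A * N X * Aᴴ) M
      = (1 : Matrix k k ℂ) ⊗ₖ A * idTensor k N M * ((1 : Matrix k k ℂ) ⊗ₖ A)ᴴ := by
  ext p q
  rw [one_kronecker_mul_mul_conjTranspose_apply]
  rfl

theorem idTensor_conj_right [Fintype n'] (N : Matrix n n ℂ → Matrix m m ℂ) (B : Matrix n n' ℂ)
    (M : Matrix (k × n') (k × n') ℂ) :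
    idTensor k (fun X => N (B * X * Bᴴ)) M
      = idTensor k N ((1 : Matrix k k ℂ) ⊗ₖ B * M * ((1 : Matrix k k ℂ) ⊗ₖ B)ᴴ) := by
  ext p q
  simp only [idTensor, Matrix.of_apply, one_kronecker_mul_mul_conjTranspose_apply]
  rfl

end

section

variable {n n' m m' : Type*} [Fintype n'] [Fintype m] {N : Matrix n n ℂ → Matrix m m ℂ}

theorem IsLinearMap.conj (hN : IsLinearMap ℂ N) (A : Matrix m' m ℂ) (B : Matrix n n' ℂ) :
    IsLinearMap ℂ (fun X : Matrix n' n' ℂ => A * N (B * X * Bᴴ) * Aᴴ) where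
  map_add X Y := by simp only [Matrix.mul_add, Matrix.add_mul, hN.map_add]
  map_smul c X := by simp only [Matrix.mul_smul, Matrix.smul_mul, hN.map_smul]

variable [Fintype n] [Fintype m']

theorem IsCP.conj (hN : IsCP N) (A : Matrix m' m ℂ) (B : Matrix n n' ℂ) :
    IsCP (fun X : Matrix n' n' ℂ => A * N (B * X * Bᴴ) * Aᴴ) := by
  intro k M hM
  rw [idTensor_conj_left (fun X => N (B * X * Bᴴ)), idTensor_conj_right]
  exact (hN k _ (hM.mul_mul_conjTranspose_same _)).mul_mul_conjTranspose_same _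

variable [DecidableEq n'] [DecidableEq m]

theorem IsTP.conj (hN : IsTP N) {A : Matrix m' m ℂ} {B : Matrix n n' ℂ}
    (hA : Aᴴ * A = 1) (hB : Bᴴ * B = 1) :
    IsTP (fun X : Matrix n' n' ℂ => A * N (B * X * Bᴴ) * Aᴴ) := by
  intro X
  rw [Matrix.trace_mul_cycle, hA, Matrix.one_mul, hN, Matrix.trace_mul_cycle, hB, Matrix.one_mul]

theorem IsCPTP.conj (hN : IsCPTP N) {A : Matrix m' m ℂ} {B : Matrix n n' ℂ}
    (hA : Aᴴ * A = 1) (hB : Bᴴ * B = 1) :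
    IsCPTP (fun X : Matrix n' n' ℂ => A * N (B * X * Bᴴ) * Aᴴ) :=
  ⟨hN.1.conj A B, hN.2.1.conj A B, hN.2.2.conj hA hB⟩

theorem decompCosts_subset_conj {A : Matrix m' m ℂ} {B : Matrix n n' ℂ}
    (hA : Aᴴ * A = 1) (hB : Bᴴ * B = 1) :
    decompCosts N ⊆ decompCosts (fun X : Matrix n' n' ℂ => A * N (B * X * Bᴴ) * Aᴴ) := by
  rintro c ⟨s, η, O, hO, hN, rfl⟩
  refine ⟨s, η, fun i (X : Matrix n' n' ℂ) => A * O i (B * X * Bᴴ) * Aᴴ,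
    fun i => (hO i).conj hA hB, fun X => ?_, rfl⟩
  simp only [hN, Matrix.mul_sum, Matrix.sum_mul, Matrix.mul_smul, Matrix.smul_mul]

end

theorem decompCosts_conj_unitary {n m : Type*} [Fintype n] [DecidableEq n] [Fintype m]
    [DecidableEq m] (N : Matrix n n ℂ → Matrix m m ℂ) {U : Matrix m m ℂ} {V : Matrix n n ℂ}
    (hU : U ∈ Matrix.unitaryGroup m ℂ) (hV : V ∈ Matrix.unitaryGroup n ℂ) :
    decompCosts (fun X => U * N (V * X * Vᴴ) * Uᴴ) = decompCosts N := by
  have hUU : Uᴴ * U = 1 := Matrix.mem_unitaryGroup_iff'.mp hU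
  have hVV : Vᴴ * V = 1 := Matrix.mem_unitaryGroup_iff'.mp hV
  have hUU' : U * Uᴴ = 1 := Matrix.mem_unitaryGroup_iff.mp hU
  have hVV' : V * Vᴴ = 1 := Matrix.mem_unitaryGroup_iff.mp hV
  refine (decompCosts_subset_conj hUU hVV).antisymm' ?_
  have hN : N = fun X => Uᴴ * (U * N (V * (Vᴴ * X * Vᴴᴴ) * Vᴴ) * Uᴴ) * Uᴴᴴ := by
    funext X
    simp only [Matrix.conjTranspose_conjTranspose, ← Matrix.mul_assoc, hUU, hVV', Matrix.one_mul]
    simp only [Matrix.mul_assoc, hUU, hVV', Matrix.mul_one]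
  conv_rhs => rw [hN]
  exact decompCosts_subset_conj (by simpa using hUU') (by simpa using hVV')

theorem nu_unitary_invariance_general {d : ℕ}
    (N : Matrix (Fin d) (Fin d) ℂ → Matrix (Fin d) (Fin d) ℂ)
    (U V : Matrix (Fin d) (Fin d) ℂ)
    (hU : U ∈ Matrix.unitaryGroup (Fin d) ℂ)
    (hV : V ∈ Matrix.unitaryGroup (Fin d) ℂ) :
    nu (fun X => U * N (V * X * Vᴴ) * Uᴴ) = nu N := by
  rw [nu, nu, decompCosts_conj_unitary N hU hV]

/-- unitary channel invariance: `ν(𝒰 ∘ N ∘ 𝒱) = ν(N)` for unitary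
channels `𝒰(X) = U X U†` and `𝒱(X) = V X V†`. -/
theorem nu_unitary_invariance {d : ℕ}
    (N : Matrix (Fin d) (Fin d) ℂ → Matrix (Fin d) (Fin d) ℂ)
    (hlin : IsLinearMap ℂ N) (hHP : IsHP N) (hTP : IsTP N)
    (U V : Matrix (Fin d) (Fin d) ℂ)
    (hU : U ∈ Matrix.unitaryGroup (Fin d) ℂ)
    (hV : V ∈ Matrix.unitaryGroup (Fin d) ℂ) :
    nu (fun X => U * N (V * X * Vᴴ) * Uᴴ) = nu N :=
  nu_unitary_invariance_general N U V hU hV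

end
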